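/- For every continuous function f : [0,1] → ℂ and every c ∈ ℂ there exists exactly one function w : [0,1] → ℂ of class C⁴ satisfying w''''(s) − (γ − η²)·w''(s) = −f(s) on [0,1], w(0) = 0, w''(0) = 0, w''(1) + κ·c = 0, and w'''(1) − (γ − η²)·w'(1) = 0; moreover, writing μ = √(γ − η²) and F(s) = ∫₀ˢ ( ∫ₜ¹ f(r) dr ) dt, this solution is given explicitly by w(s) = b·sinh(μs) + (1/μ)·∫₀ˢ sinh(μ(s − r))·F(r) dr with b = ( −μ·∫₀¹ sinh(μ(1 − r))·F(r) dr − F(1) − κ·c ) / ( μ²·sinh(μ) ). -/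

import Mathlib

/-!
With `μ = √(γ - η²)`, the candidate is `w = b sinh(μ s) + μ⁻¹ (sinh(μ ·) ⋆ F)(s)`. The
addition formula splits the convolution as `sinh(μ s) ∫₀ˢ cosh(μ r) F - cosh(μ s) ∫₀ˢ sinh(μ r) F`,
so it can be differentiated directly and gives `w'' = μ² w + F`. Hence `w'''' - μ² w'' = F'' = -f`,
the conditions at `0` and the third-order condition at `1` hold for every `b`, and `b` is the value
that makes `w''(1) = -κ c`.

For uniqueness let `v` be the difference of two solutions and `u = v''`, so `u'' = μ² u` and
`u(0) = u(1) = 0`. The Wronskians of `u` with `sinh(μ s)` and with `sinh(μ (s - 1))` are constant,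
hence zero; their determinant is `±sinh μ ≠ 0`, so `u = u' = 0` on `[0, 1]`. The last boundary
condition then gives `v'(1) = 0`, and `v = 0` follows from `v'' = 0` and `v(0) = 0`.
-/

open Set Complex

/-- `F(s) = ∫₀ˢ (∫ₜ¹ f(r) dr) dt`. -/
noncomputable def Fint (f : ℝ → ℂ) (s : ℝ) : ℂ :=
  ∫ t in (0:ℝ)..s, (∫ r in t..(1:ℝ), f r)

/-- The constant `b` in the explicit solution formula. -/
noncomputable def bconst (η γ κ : ℝ) (f : ℝ → ℂ) (c : ℂ) : ℂ :=
  (-((Real.sqrt (γ - η^2) : ℝ) : ℂ)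
      * (∫ r in (0:ℝ)..1,
          ((Real.sinh (Real.sqrt (γ - η^2) * (1 - r)) : ℝ) : ℂ) * Fint f r)
    - Fint f 1 - ((κ : ℝ) : ℂ) * c)
  / (((Real.sqrt (γ - η^2))^2 * Real.sinh (Real.sqrt (γ - η^2)) : ℝ) : ℂ)

/-- The explicit solution
`w(s) = b·sinh(μs) + (1/μ)·∫₀ˢ sinh(μ(s−r))·F(r) dr` with `μ = √(γ−η²)`. -/
noncomputable def wExplicit (η γ κ : ℝ) (f : ℝ → ℂ) (c : ℂ) (s : ℝ) : ℂ :=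
  bconst η γ κ f c * ((Real.sinh (Real.sqrt (γ - η^2) * s) : ℝ) : ℂ)
    + (1 / ((Real.sqrt (γ - η^2) : ℝ) : ℂ))
        * ∫ r in (0:ℝ)..s,
            ((Real.sinh (Real.sqrt (γ - η^2) * (s - r)) : ℝ) : ℂ) * Fint f r

/-- The boundary-value problem solved in the inversion of the static part of
the closed-loop system operator. -/
def SolvesBVP (η γ κ : ℝ) (f : ℝ → ℂ) (c : ℂ) (w : ℝ → ℂ) : Prop :=
  ContDiff ℝ 4 w ∧
  (∀ s ∈ Icc (0:ℝ) 1,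
    iteratedDeriv 4 w s - ((γ - η^2 : ℝ) : ℂ) * iteratedDeriv 2 w s = -f s) ∧
  w 0 = 0 ∧ iteratedDeriv 2 w 0 = 0 ∧
  iteratedDeriv 2 w 1 + ((κ : ℝ) : ℂ) * c = 0 ∧
  iteratedDeriv 3 w 1 - ((γ - η^2 : ℝ) : ℂ) * deriv w 1 = 0

section General

variable {E : Type*} [NormedAddCommGroup E] [NormedSpace ℝ E]

noncomputable def sinhConv (μ : ℝ) (F : ℝ → E) (s : ℝ) : E :=
  ∫ r in (0:ℝ)..s, Real.sinh (μ * (s - r)) • F r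

noncomputable def coshConv (μ : ℝ) (F : ℝ → E) (s : ℝ) : E :=
  ∫ r in (0:ℝ)..s, Real.cosh (μ * (s - r)) • F r

theorem hasDerivAt_sinh_mul (μ s : ℝ) :
    HasDerivAt (fun s => Real.sinh (μ * s)) (μ * Real.cosh (μ * s)) s := by
  simpa [mul_comm] using ((hasDerivAt_id s).const_mul μ).sinh

theorem hasDerivAt_cosh_mul (μ s : ℝ) :
    HasDerivAt (fun s => Real.cosh (μ * s)) (μ * Real.sinh (μ * s)) s := by
  simpa [mul_comm] using ((hasDerivAt_id s).const_mul μ).cosh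

section Convolution

variable {μ : ℝ} {F : ℝ → E}

theorem integral_mul_smul_sub_mul_smul (hF : Continuous F) {p q : ℝ → ℝ} (hp : Continuous p)
    (hq : Continuous q) (a b s : ℝ) :
    ∫ r in (0:ℝ)..s, (a * p r - b * q r) • F r
      = a • (∫ r in (0:ℝ)..s, p r • F r) - b • ∫ r in (0:ℝ)..s, q r • F r := by
  simp only [sub_smul, mul_smul]
  rw [intervalIntegral.integral_sub, intervalIntegral.integral_smul,
    intervalIntegral.integral_smul]
  all_goals exact Continuous.intervalIntegrable (by fun_prop) _ _

theorem sinhConv_eq (hF : Continuous F) (s : ℝ) :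
    sinhConv μ F s = Real.sinh (μ * s) • (∫ r in (0:ℝ)..s, Real.cosh (μ * r) • F r)
      - Real.cosh (μ * s) • ∫ r in (0:ℝ)..s, Real.sinh (μ * r) • F r := by
  simp only [sinhConv, mul_sub, Real.sinh_sub]
  exact integral_mul_smul_sub_mul_smul hF (by fun_prop) (by fun_prop) _ _ s

theorem coshConv_eq (hF : Continuous F) (s : ℝ) :
    coshConv μ F s = Real.cosh (μ * s) • (∫ r in (0:ℝ)..s, Real.cosh (μ * r) • F r)
      - Real.sinh (μ * s) • ∫ r in (0:ℝ)..s, Real.sinh (μ * r) • F r := by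
  simp only [coshConv, mul_sub, Real.cosh_sub]
  exact integral_mul_smul_sub_mul_smul hF (by fun_prop) (by fun_prop) _ _ s

variable [CompleteSpace E]

theorem hasDerivAt_sinhConv (hF : Continuous F) (s : ℝ) :
    HasDerivAt (sinhConv μ F) (μ • coshConv μ F s) s := by
  have hP : HasDerivAt (fun s => ∫ r in (0:ℝ)..s, Real.cosh (μ * r) • F r)
      (Real.cosh (μ * s) • F s) s :=
    (Continuous.integral_hasStrictDerivAt (by fun_prop) 0 s).hasDerivAt
  have hQ : HasDerivAt (fun s => ∫ r in (0:ℝ)..s, Real.sinh (μ * r) • F r)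
      (Real.sinh (μ * s) • F s) s :=
    (Continuous.integral_hasStrictDerivAt (by fun_prop) 0 s).hasDerivAt
  rw [funext (sinhConv_eq hF), coshConv_eq hF]
  refine (((hasDerivAt_sinh_mul μ s).smul hP).sub
    ((hasDerivAt_cosh_mul μ s).smul hQ)).congr_deriv ?_
  module

theorem hasDerivAt_coshConv (hF : Continuous F) (s : ℝ) :
    HasDerivAt (coshConv μ F) (μ • sinhConv μ F s + F s) s := by
  have hP : HasDerivAt (fun s => ∫ r in (0:ℝ)..s, Real.cosh (μ * r) • F r)
      (Real.cosh (μ * s) • F s) s :=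
    (Continuous.integral_hasStrictDerivAt (by fun_prop) 0 s).hasDerivAt
  have hQ : HasDerivAt (fun s => ∫ r in (0:ℝ)..s, Real.sinh (μ * r) • F r)
      (Real.sinh (μ * s) • F s) s :=
    (Continuous.integral_hasStrictDerivAt (by fun_prop) 0 s).hasDerivAt
  rw [funext (coshConv_eq hF), sinhConv_eq hF]
  refine (((hasDerivAt_cosh_mul μ s).smul hP).sub
    ((hasDerivAt_sinh_mul μ s).smul hQ)).congr_deriv ?_
  linear_combination (norm := module) (Real.cosh_sq_sub_sinh_sq (μ * s)) • F s

theorem hasDerivAt_sinh_smul_add_sinhConv (hμ : μ ≠ 0) (hF : Continuous F) (b : E) (s : ℝ) :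
    HasDerivAt (fun s => Real.sinh (μ * s) • b + μ⁻¹ • sinhConv μ F s)
      ((μ * Real.cosh (μ * s)) • b + coshConv μ F s) s := by
  refine (((hasDerivAt_sinh_mul μ s).smul_const b).add
    ((hasDerivAt_sinhConv hF s).const_smul μ⁻¹)).congr_deriv ?_
  rw [smul_smul, inv_mul_cancel₀ hμ, one_smul]

theorem hasDerivAt_mul_cosh_smul_add_coshConv (hμ : μ ≠ 0) (hF : Continuous F) (b : E)
    (s : ℝ) :
    HasDerivAt (fun s => (μ * Real.cosh (μ * s)) • b + coshConv μ F s)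
      (μ ^ 2 • (Real.sinh (μ * s) • b + μ⁻¹ • sinhConv μ F s) + F s) s := by
  refine ((((hasDerivAt_cosh_mul μ s).const_mul μ).smul_const b).add
    (hasDerivAt_coshConv hF s)).congr_deriv ?_
  rw [smul_add, smul_smul, smul_smul, sq, mul_inv_cancel_right₀ hμ]
  module

end Convolution

theorem hasDerivAt_integral_to_one [CompleteSpace E] {g : ℝ → E} (hg : Continuous g) (x : ℝ) :
    HasDerivAt (fun t => ∫ r in t..(1:ℝ), g r) (-g x) x :=
  intervalIntegral.integral_hasDerivAt_left (hg.intervalIntegrable _ _)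
    (hg.stronglyMeasurableAtFilter _ _) hg.continuousAt

theorem contDiff_succ_of_hasDerivAt {f f' : ℝ → E} {n : ℕ} (hf : ∀ x, HasDerivAt f (f' x) x)
    (hf' : ContDiff ℝ n f') : ContDiff ℝ (n + 1) f := by
  have hderiv : deriv f = f' := funext fun x => (hf x).deriv
  exact_mod_cast contDiff_succ_iff_deriv.mpr
    ⟨fun x => (hf x).differentiableAt, by simp, hderiv ▸ hf'⟩

theorem contDiff_four_of_hasDerivAt_sq_smul_add {w w' F : ℝ → E} {μ : ℝ}
    (hw : ∀ x, HasDerivAt w (w' x) x) (hw' : ∀ x, HasDerivAt w' (μ ^ 2 • w x + F x) x)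
    (hF : ContDiff ℝ 2 F) : ContDiff ℝ 4 w := by
  have hwc : Continuous w := continuous_iff_continuousAt.2 fun x => (hw x).continuousAt
  have hw2 : ContDiff ℝ (1 + 1) w := contDiff_succ_of_hasDerivAt (n := 1) hw
    (contDiff_succ_of_hasDerivAt (n := 0) hw' (contDiff_zero.2 (by fun_prop)))
  exact contDiff_succ_of_hasDerivAt (n := 3) hw
    (contDiff_succ_of_hasDerivAt (n := 2) hw' ((hw2.const_smul _).add hF))

theorem ContDiff.hasDerivAt_iteratedDeriv {w : ℝ → E} {n : WithTop ℕ∞} (hw : ContDiff ℝ n w)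
    {k : ℕ} (hk : k < n) (x : ℝ) :
    HasDerivAt (iteratedDeriv k w) (iteratedDeriv (k + 1) w x) x := by
  rw [iteratedDeriv_succ]
  exact (hw.differentiable_iteratedDeriv k hk x).hasDerivAt

theorem eqOn_Icc_of_hasDerivAt_zero {f : ℝ → E} {a b : ℝ}
    (hf : ∀ x ∈ Icc a b, HasDerivAt f 0 x) : ∀ x ∈ Icc a b, f x = f a :=
  constant_of_has_deriv_right_zero (fun x hx => (hf x hx).continuousAt.continuousWithinAt)
    fun x hx => (hf x (Ico_subset_Icc_self hx)).hasDerivWithinAt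

theorem eq_zero_of_hasDerivAt_sq_smul_of_boundary {u u' : ℝ → E} {μ a b : ℝ} (hμ : μ ≠ 0)
    (hab : a < b) (hu : ∀ x, HasDerivAt u (u' x) x)
    (hu' : ∀ x ∈ Icc a b, HasDerivAt u' (μ ^ 2 • u x) x) (ha : u a = 0) (hb : u b = 0) :
    ∀ s ∈ Icc a b, u s = 0 ∧ u' s = 0 := by
  -- `W t` is the Wronskian of `u` and `s ↦ sinh (μ (s - t))`
  set W : ℝ → ℝ → E := fun t s =>
    (μ * Real.cosh (μ * (s - t))) • u s - Real.sinh (μ * (s - t)) • u' s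
  have hW : ∀ t, ∀ x ∈ Icc a b, HasDerivAt (W t) 0 x := by
    intro t x hx
    have hsh : HasDerivAt (fun s => μ * (s - t)) μ x := by
      simpa using ((hasDerivAt_id x).sub_const t).const_mul μ
    refine (((hsh.cosh.const_mul μ).smul (hu x)).sub (hsh.sinh.smul (hu' x hx))).congr_deriv ?_
    module
  have hWa : ∀ s ∈ Icc a b, W a s = 0 := fun s hs => by
    rw [eqOn_Icc_of_hasDerivAt_zero (hW a) s hs]
    simp [W, ha]
  have hWb : ∀ s ∈ Icc a b, W b s = 0 := fun s hs => by
    rw [eqOn_Icc_of_hasDerivAt_zero (hW b) s hs,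
      ← eqOn_Icc_of_hasDerivAt_zero (hW b) b ⟨hab.le, le_rfl⟩]
    simp [W, hb]
  intro s hs
  have hdet : Real.sinh (μ * (s - b)) * Real.cosh (μ * (s - a))
      - Real.cosh (μ * (s - b)) * Real.sinh (μ * (s - a)) = Real.sinh (μ * (a - b)) := by
    rw [← Real.sinh_sub]
    ring_nf
  have hdet0 : Real.sinh (μ * (a - b)) ≠ 0 :=
    Real.sinh_ne_zero.mpr (mul_ne_zero hμ (sub_ne_zero.mpr hab.ne))
  have ea := hWa s hs
  have eb := hWb s hs
  simp only [W] at ea eb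
  constructor
  · have h : (μ * Real.sinh (μ * (a - b))) • u s = 0 := by
      rw [← hdet]
      linear_combination (norm := module)
        Real.sinh (μ * (s - b)) • ea - Real.sinh (μ * (s - a)) • eb
    exact (smul_eq_zero.mp h).resolve_left (mul_ne_zero hμ hdet0)
  · have h : Real.sinh (μ * (a - b)) • u' s = 0 := by
      rw [← hdet]
      linear_combination (norm := module)
        Real.cosh (μ * (s - b)) • ea - Real.cosh (μ * (s - a)) • eb
    exact (smul_eq_zero.mp h).resolve_left hdet0

end General

theorem hasDerivAt_Fint {g : ℝ → ℂ} (hg : Continuous g) (x : ℝ) :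
    HasDerivAt (Fint g) (∫ r in x..(1:ℝ), g r) x :=
  (Continuous.integral_hasStrictDerivAt (continuous_iff_continuousAt.2 fun t =>
    (hasDerivAt_integral_to_one hg t).continuousAt) 0 x).hasDerivAt

theorem contDiff_Fint {g : ℝ → ℂ} (hg : Continuous g) : ContDiff ℝ 2 (Fint g) :=
  contDiff_succ_of_hasDerivAt (n := 1) (hasDerivAt_Fint hg)
    (contDiff_succ_of_hasDerivAt (n := 0) (hasDerivAt_integral_to_one hg)
      (contDiff_zero.2 hg.neg))

theorem wExplicit_eq (η γ κ : ℝ) (f : ℝ → ℂ) (c : ℂ) :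
    wExplicit η γ κ f c = fun s => Real.sinh (Real.sqrt (γ - η ^ 2) * s) • bconst η γ κ f c
      + (Real.sqrt (γ - η ^ 2))⁻¹ • sinhConv (Real.sqrt (γ - η ^ 2)) (Fint f) s := by
  funext s
  simp [wExplicit, sinhConv, Complex.real_smul, mul_comm]

theorem wExplicit_zero (η γ κ : ℝ) (f : ℝ → ℂ) (c : ℂ) : wExplicit η γ κ f c 0 = 0 := by
  simp [wExplicit]

theorem bconst_spec {η γ κ : ℝ} (hγ : η ^ 2 < γ) (f : ℝ → ℂ) (c : ℂ) :
    ((γ - η ^ 2 : ℝ) : ℂ) * wExplicit η γ κ f c 1 + Fint f 1 + κ * c = 0 := by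
  set μ := Real.sqrt (γ - η ^ 2) with hμdef
  have hμ : μ ≠ 0 := (Real.sqrt_pos.mpr (sub_pos.mpr hγ)).ne'
  have hμc : (μ : ℂ) ≠ 0 := Complex.ofReal_ne_zero.2 hμ
  have hden : ((μ ^ 2 * Real.sinh μ : ℝ) : ℂ) ≠ 0 := Complex.ofReal_ne_zero.2
    (mul_ne_zero (pow_ne_zero 2 hμ) (Real.sinh_ne_zero.2 hμ))
  have hb : ((μ ^ 2 * Real.sinh μ : ℝ) : ℂ) * bconst η γ κ f c = -μ * (∫ r in (0:ℝ)..1,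
      ((Real.sinh (μ * (1 - r)) : ℝ) : ℂ) * Fint f r) - Fint f 1 - κ * c := by
    rw [bconst, mul_div_cancel₀ _ hden]
  rw [← Real.sq_sqrt (sub_pos.mpr hγ).le, ← hμdef, wExplicit, ← hμdef]
  push_cast at hb ⊢
  field_simp
  linear_combination hb

theorem solvesBVP_wExplicit {η γ κ : ℝ} (hγ : η ^ 2 < γ) {g : ℝ → ℂ} (hg : Continuous g)
    (c : ℂ) : SolvesBVP η γ κ g c (wExplicit η γ κ g c) := by
  set μ := Real.sqrt (γ - η ^ 2)
  have hμ : μ ≠ 0 := (Real.sqrt_pos.mpr (sub_pos.mpr hγ)).ne'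
  have hμ2 : ((γ - η ^ 2 : ℝ) : ℂ) = ((μ ^ 2 : ℝ) : ℂ) := by
    rw [Real.sq_sqrt (sub_pos.mpr hγ).le]
  set b := bconst η γ κ g c
  set w := wExplicit η γ κ g c
  set w' : ℝ → ℂ := fun s => (μ * Real.cosh (μ * s)) • b + coshConv μ (Fint g) s
  have hFc : Continuous (Fint g) := (contDiff_Fint hg).continuous
  have hw : ∀ x, HasDerivAt w (w' x) x := by
    rw [show w = _ from wExplicit_eq η γ κ g c]
    exact hasDerivAt_sinh_smul_add_sinhConv hμ hFc b
  have hw' : ∀ x, HasDerivAt w' (μ ^ 2 • w x + Fint g x) x := by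
    rw [show w = _ from wExplicit_eq η γ κ g c]
    exact hasDerivAt_mul_cosh_smul_add_coshConv hμ hFc b
  have hd1 : deriv w = w' := funext fun x => (hw x).deriv
  have hd2 : iteratedDeriv 2 w = fun s => μ ^ 2 • w s + Fint g s := by
    rw [iteratedDeriv_succ, iteratedDeriv_one, hd1]
    exact funext fun x => (hw' x).deriv
  have hd3 : iteratedDeriv 3 w = fun s => μ ^ 2 • w' s + ∫ r in s..(1:ℝ), g r := by
    rw [iteratedDeriv_succ, hd2]
    exact funext fun x => (((hw x).const_smul (μ ^ 2)).add (hasDerivAt_Fint hg x)).deriv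
  have hd4 : iteratedDeriv 4 w = fun s => μ ^ 2 • (μ ^ 2 • w s + Fint g s) - g s := by
    rw [iteratedDeriv_succ, hd3]
    exact funext fun x => (((hw' x).const_smul (μ ^ 2)).add
      (hasDerivAt_integral_to_one hg x)).deriv.trans (sub_eq_add_neg _ _).symm
  refine ⟨contDiff_four_of_hasDerivAt_sq_smul_add hw hw' (contDiff_Fint hg), fun s _ => ?_,
    wExplicit_zero η γ κ g c, ?_, ?_, ?_⟩
  · simp only [hd4, hd2, hμ2, Complex.real_smul]
    ring
  · simp [hd2, w, wExplicit_zero, Fint]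
  · simpa only [hd2, hμ2, Complex.real_smul] using bconst_spec hγ g c
  · simp [hd3, hd1, hμ2, Complex.real_smul]

theorem SolvesBVP.eqOn {η γ κ : ℝ} {f : ℝ → ℂ} {c : ℂ} {w w' : ℝ → ℂ} (hγ : η ^ 2 < γ)
    (hw : SolvesBVP η γ κ f c w) (hw' : SolvesBVP η γ κ f c w') : EqOn w w' (Icc 0 1) := by
  obtain ⟨hC, hode, h0, h20, h21, h31⟩ := hw
  obtain ⟨hC', hode', h0', h20', h21', h31'⟩ := hw'
  set μ := Real.sqrt (γ - η ^ 2)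
  have hμ : μ ≠ 0 := (Real.sqrt_pos.mpr (sub_pos.mpr hγ)).ne'
  have hμ2 : ((γ - η ^ 2 : ℝ) : ℂ) = ((μ ^ 2 : ℝ) : ℂ) := by
    rw [Real.sq_sqrt (sub_pos.mpr hγ).le]
  set d : ℕ → ℝ → ℂ := fun k s => iteratedDeriv k w s - iteratedDeriv k w' s
  have hd : ∀ k < 4, ∀ x, HasDerivAt (d k) (d (k + 1) x) x := fun k hk x =>
    (hC.hasDerivAt_iteratedDeriv (by exact_mod_cast hk) x).sub
      (hC'.hasDerivAt_iteratedDeriv (by exact_mod_cast hk) x)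
  have hd3 : ∀ x ∈ Icc (0:ℝ) 1, HasDerivAt (d 3) (μ ^ 2 • d 2 x) x := fun x hx => by
    refine (hd 3 (by norm_num) x).congr_deriv ?_
    rw [Complex.real_smul, ← hμ2]
    linear_combination hode x hx - hode' x hx
  have hd23 := eq_zero_of_hasDerivAt_sq_smul_of_boundary hμ zero_lt_one (hd 2 (by norm_num))
    hd3 (by simp [d, h20, h20']) (by simp only [d]; linear_combination h21 - h21')
  have hd11 : d 1 1 = 0 := by
    have hd31 : d 3 1 = 0 := (hd23 1 ⟨zero_le_one, le_rfl⟩).2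
    have hγ0 : ((γ - η ^ 2 : ℝ) : ℂ) ≠ 0 := Complex.ofReal_ne_zero.2 (sub_pos.2 hγ).ne'
    simp only [d, iteratedDeriv_one] at hd31 ⊢
    refine (mul_eq_zero.1 ?_).resolve_left hγ0
    linear_combination hd31 - h31 + h31'
  have hd1 : ∀ s ∈ Icc (0:ℝ) 1, d 1 s = 0 := fun s hs => by
    have hconst :=
      eqOn_Icc_of_hasDerivAt_zero fun x hx => (hd23 x hx).1 ▸ hd 1 (by norm_num) x
    rw [hconst s hs, ← hconst 1 ⟨zero_le_one, le_rfl⟩, hd11]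
  intro s hs
  have hconst := eqOn_Icc_of_hasDerivAt_zero fun x hx => hd1 x hx ▸ hd 0 (by norm_num) x
  simpa [d, h0, h0', sub_eq_zero] using hconst s hs

section Congr

variable {f g : ℝ → ℂ}

theorem Fint_congr (h : EqOn f g (Icc 0 1)) : EqOn (Fint f) (Fint g) (Icc 0 1) := by
  intro s hs
  refine intervalIntegral.integral_congr fun t ht =>
    intervalIntegral.integral_congr fun r hr => h ?_
  rw [uIcc_of_le hs.1] at ht
  rw [uIcc_of_le (ht.2.trans hs.2)] at hr
  exact ⟨ht.1.trans hr.1, hr.2⟩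

theorem wExplicit_congr (η γ κ : ℝ) (c : ℂ) (h : EqOn f g (Icc 0 1)) :
    EqOn (wExplicit η γ κ f c) (wExplicit η γ κ g c) (Icc 0 1) := by
  have hconv : ∀ s ∈ Icc (0:ℝ) 1, ∀ μ : ℝ,
      ∫ r in (0:ℝ)..s, ((Real.sinh (μ * (s - r)) : ℝ) : ℂ) * Fint f r
        = ∫ r in (0:ℝ)..s, ((Real.sinh (μ * (s - r)) : ℝ) : ℂ) * Fint g r := fun s hs μ =>
    intervalIntegral.integral_congr fun r hr => by
      rw [uIcc_of_le hs.1] at hr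
      rw [Fint_congr h ⟨hr.1, hr.2.trans hs.2⟩]
  intro s hs
  simp only [wExplicit, bconst, hconv s hs, hconv 1 ⟨zero_le_one, le_rfl⟩,
    Fint_congr h ⟨zero_le_one, le_rfl⟩]

theorem SolvesBVP.congr {η γ κ : ℝ} {c : ℂ} {w : ℝ → ℂ} (hw : SolvesBVP η γ κ g c w)
    (h : EqOn f g (Icc 0 1)) : SolvesBVP η γ κ f c w := by
  obtain ⟨hC, hode, hbc⟩ := hw
  exact ⟨hC, fun s hs => h hs ▸ hode s hs, hbc⟩

end Congr

theorem static_problem_unique_solution_general (η γ κ : ℝ)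
    (hγ : η^2 < γ) (f : ℝ → ℂ) (hf : ContinuousOn f (Icc (0:ℝ) 1)) (c : ℂ) :
    ∃ w : ℝ → ℂ, SolvesBVP η γ κ f c w ∧
      (∀ s ∈ Icc (0:ℝ) 1, w s = wExplicit η γ κ f c s) ∧
      (∀ w' : ℝ → ℂ, SolvesBVP η γ κ f c w' →
        ∀ s ∈ Icc (0:ℝ) 1, w' s = w s) := by
  -- `f` is arbitrary outside `[0, 1]`, so the solution is built from a continuous extension
  set g := IccExtend zero_le_one ((Icc (0:ℝ) 1).domRestrict f) with hgdef
  have hg : Continuous g := hf.domRestrict.Icc_extend'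
  have hfg : EqOn f g (Icc 0 1) := fun x hx => by
    rw [hgdef, IccExtend_of_mem zero_le_one _ hx, domRestrict_apply]
  have hsol : SolvesBVP η γ κ f c (wExplicit η γ κ g c) :=
    (solvesBVP_wExplicit hγ hg c).congr hfg
  exact ⟨wExplicit η γ κ g c, hsol, fun s hs => (wExplicit_congr η γ κ c hfg hs).symm,
    fun w' hw' s hs => hw'.eqOn hγ hsol hs⟩

/-- the static boundary-value problem has exactly one `C⁴`
solution on `[0,1]`, given by the explicit formula `wExplicit`. -/
theorem static_problem_unique_solution (η γ κ : ℝ) (hη : 0 ≤ η) (hκ : 0 ≤ κ)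
    (hγ : η^2 < γ) (f : ℝ → ℂ) (hf : ContinuousOn f (Icc (0:ℝ) 1)) (c : ℂ) :
    ∃ w : ℝ → ℂ, SolvesBVP η γ κ f c w ∧
      (∀ s ∈ Icc (0:ℝ) 1, w s = wExplicit η γ κ f c s) ∧
      (∀ w' : ℝ → ℂ, SolvesBVP η γ κ f c w' →
        ∀ s ∈ Icc (0:ℝ) 1, w' s = w s) :=
  static_problem_unique_solution_general η γ κ hγ f hf c
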